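/- Let M ≥ 2 be an even integer and N ≥ 4 an integer divisible by 4. Then the Linogram Fourier Domain 𝔏_{M,N}, viewed as a finite subset of ℝ², has exactly (M−1)N + 1 distinct points. -/

import Mathlib

open Real

/-- The "horizontal" part of the Linogram Fourier Domain:
`𝔥_{M,N} := {(2πI/M, (2πI/M)(4J/N)) : −N/4+1 ≤ J ≤ N/4, −M/2 ≤ I ≤ M/2−1}`. -/
def linogramH (M N : ℕ) : Set (ℝ × ℝ) :=
  {p | ∃ I J : ℤ, -(M : ℤ) / 2 ≤ I ∧ I ≤ (M : ℤ) / 2 - 1 ∧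
    -(N : ℤ) / 4 + 1 ≤ J ∧ J ≤ (N : ℤ) / 4 ∧
    p = (2 * π * I / M, (2 * π * I / M) * (4 * J / N))}

/-- The "vertical" part of the Linogram Fourier Domain:
`𝔳_{M,N} := {((2πI/M)(4J/N), 2πI/M) : −N/4 ≤ J ≤ N/4−1, −M/2+1 ≤ I ≤ M/2}`. -/
def linogramV (M N : ℕ) : Set (ℝ × ℝ) :=
  {p | ∃ I J : ℤ, -(M : ℤ) / 2 + 1 ≤ I ∧ I ≤ (M : ℤ) / 2 ∧
    -(N : ℤ) / 4 ≤ J ∧ J ≤ (N : ℤ) / 4 - 1 ∧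
    p = ((2 * π * I / M) * (4 * J / N), 2 * π * I / M)}

/-- The Linogram Fourier Domain `𝔏_{M,N} := 𝔥_{M,N} ∪ 𝔳_{M,N}`. -/
def LFD (M N : ℕ) : Set (ℝ × ℝ) := linogramH M N ∪ linogramV M N

/-! The horizontal part consists of the points `(x, x * s)` with `x = 2πI/M` and slopes
`s = 4J/N ∈ (-1, 1]`. All points with `I = 0` collapse to the origin, and any other point
determines `(I, J)`, so `|𝔥| = (M - 1) (N / 2) + 1`; likewise for `𝔳`, with the coordinates swapped
and slopes in `[-1, 1)`. A common nonzero point `(x, x * s) = (y * t, y)` would force `s * t = 1`,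
which these slope ranges exclude, so `𝔥 ∩ 𝔳 = {0}` and inclusion–exclusion gives `(M - 1) N + 1`. -/

open Set

def fanPoint (u v : ℝ) (q : ℤ × ℤ) : ℝ × ℝ := (u * q.1, u * q.1 * (v * q.2))

def fanGrid (u v : ℝ) (a b c d : ℤ) : Set (ℝ × ℝ) := fanPoint u v '' Icc a b ×ˢ Icc c d

section FanGrid

variable {u v : ℝ} {a b c d : ℤ}

lemma fanPoint_injOn (hu : u ≠ 0) (hv : v ≠ 0) : InjOn (fanPoint u v) {q | q.1 ≠ 0} := by
  rintro ⟨I, J⟩ (hI : I ≠ 0) ⟨I', J'⟩ - h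
  simp only [fanPoint, Prod.mk.injEq] at h
  obtain ⟨hII', hJJ'⟩ := h
  have hI' : I = I' := by exact_mod_cast mul_left_cancel₀ hu hII'
  subst hI'
  have : (J : ℝ) = J' := mul_left_cancel₀ hv <|
    mul_left_cancel₀ (mul_ne_zero hu (Int.cast_ne_zero.2 hI)) hJJ'
  rw [Int.cast_inj.1 this]

lemma fanPoint_eq_zero_iff (hu : u ≠ 0) {q : ℤ × ℤ} : fanPoint u v q = 0 ↔ q.1 = 0 := by
  simp +contextual [fanPoint, Prod.ext_iff, hu]

lemma fanGrid_finite : (fanGrid u v a b c d).Finite :=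
  ((finite_Icc a b).prod (finite_Icc c d)).image _

lemma fanGrid_eq_insert (h0 : 0 ∈ Icc a b) (hcd : c ≤ d) :
    fanGrid u v a b c d = insert 0 (fanPoint u v '' (Icc a b \ {0}) ×ˢ Icc c d) := by
  have hcol : fanPoint u v '' (Prod.mk 0 '' Icc c d) = {0} := by
    rw [image_image]
    simpa [fanPoint, ← Prod.zero_eq_mk] using (nonempty_Icc.2 hcd).image_const (0 : ℝ × ℝ)
  conv_lhs => rw [fanGrid, ← insert_eq_of_mem h0, ← insert_sdiff_singleton, insert_prod]
  rw [image_union, hcol, singleton_union]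

lemma ncard_fanGrid (hu : u ≠ 0) (hv : v ≠ 0) (ha : a ≤ 0) (hb : 0 ≤ b) (hcd : c ≤ d) :
    ((fanGrid u v a b c d).ncard : ℤ) = (b - a) * (d - c + 1) + 1 := by
  have h0 : (0 : ℤ) ∈ Icc a b := ⟨ha, hb⟩
  have hIcc (x y : ℤ) (hxy : x ≤ y + 1) : ((Icc x y).ncard : ℤ) = y + 1 - x := by
    rw [← Finset.coe_Icc, ncard_coe_finset, Int.card_Icc_of_le _ _ hxy]
  have hslice : ((Icc a b \ {0}).ncard : ℤ) + 1 = b + 1 - a := by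
    rw [← hIcc a b (by omega)]
    exact_mod_cast ncard_sdiff_singleton_add_one h0 (finite_Icc a b)
  have hnot : (0 : ℝ × ℝ) ∉ fanPoint u v '' (Icc a b \ {0}) ×ˢ Icc c d := by
    rintro ⟨q, hq, hq0⟩
    exact hq.1.2 ((fanPoint_eq_zero_iff hu).1 hq0)
  rw [fanGrid_eq_insert h0 hcd, ncard_insert_of_notMem hnot,
    ((fanPoint_injOn hu hv).mono fun q hq => hq.1.2).ncard_image, ncard_prod]
  push_cast
  rw [hIcc c d (by omega)]
  linear_combination (d + 1 - c) * hslice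

lemma zero_mem_fanGrid (h0 : 0 ∈ Icc a b) (hcd : c ≤ d) : 0 ∈ fanGrid u v a b c d :=
  fanGrid_eq_insert h0 hcd ▸ mem_insert _ _

end FanGrid

lemma mul_ne_one_of_mem_Ioc_of_mem_Ico {s t : ℝ} (hs : s ∈ Ioc (-1) 1) (ht : t ∈ Ico (-1) 1) :
    s * t ≠ 1 := by
  obtain ⟨hs₁, hs₂⟩ := hs
  obtain ⟨ht₁, ht₂⟩ := ht
  intro hst
  nlinarith [mul_nonneg (sub_nonneg.2 hs₂) (neg_le_iff_add_nonneg.1 ht₁),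
    mul_pos (neg_lt_iff_pos_add.1 hs₁) (sub_pos.2 ht₂)]

lemma eq_zero_of_mk_mul_eq_mul_mk {x y s t : ℝ} (h : (x, x * s) = (y * t, y)) (hst : s * t ≠ 1) :
    x = 0 := by
  obtain ⟨hx, hy⟩ := Prod.mk.inj h
  have : x * (1 - s * t) = 0 := by rw [← hy] at hx; linear_combination hx
  exact (mul_eq_zero.1 this).resolve_right (sub_ne_zero.2 hst.symm)

section Linogram

variable (m n : ℕ)

lemma linogram_point_eq_fanPoint (I J : ℤ) :
    ((2 * π * I / ((2 * m : ℕ) : ℝ), 2 * π * I / ((2 * m : ℕ) : ℝ) * (4 * J / ((4 * n : ℕ) : ℝ)))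
      : ℝ × ℝ) = fanPoint (π / m) (n : ℝ)⁻¹ (I, J) := by
  simp only [fanPoint]
  push_cast
  ring_nf

lemma linogramH_eq_fanGrid :
    linogramH (2 * m) (4 * n) = fanGrid (π / m) (n : ℝ)⁻¹ (-m) (m - 1) (1 - n) n := by
  ext p
  constructor
  · rintro ⟨I, J, h₁, h₂, h₃, h₄, rfl⟩
    exact ⟨(I, J), ⟨⟨by omega, by omega⟩, by omega, by omega⟩,
      (linogram_point_eq_fanPoint m n I J).symm⟩
  · rintro ⟨⟨I, J⟩, ⟨⟨h₁, h₂⟩, h₃, h₄⟩, rfl⟩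
    exact ⟨I, J, by omega, by omega, by omega, by omega, (linogram_point_eq_fanPoint m n I J).symm⟩

lemma linogramV_eq_swap_fanGrid :
    linogramV (2 * m) (4 * n) = Prod.swap '' fanGrid (π / m) (n : ℝ)⁻¹ (1 - m) m (-n) (n - 1) := by
  ext p
  constructor
  · rintro ⟨I, J, h₁, h₂, h₃, h₄, rfl⟩
    exact ⟨_, ⟨(I, J), ⟨⟨by omega, by omega⟩, by omega, by omega⟩, rfl⟩,
      by rw [← linogram_point_eq_fanPoint m n I J]; rfl⟩
  · rintro ⟨_, ⟨⟨I, J⟩, ⟨⟨h₁, h₂⟩, h₃, h₄⟩, rfl⟩, rfl⟩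
    exact ⟨I, J, by omega, by omega, by omega, by omega,
      by rw [← linogram_point_eq_fanPoint m n I J]; rfl⟩

lemma linogramH_inter_linogramV (hm : 0 < m) (hn : 0 < n) :
    linogramH (2 * m) (4 * n) ∩ linogramV (2 * m) (4 * n) = {0} := by
  have hn' : (0 : ℝ) < n := by exact_mod_cast hn
  rw [linogramH_eq_fanGrid, linogramV_eq_swap_fanGrid]
  refine Subset.antisymm ?_ ?_
  · rintro _ ⟨⟨⟨I, J⟩, ⟨-, hJ₁, hJ₂⟩, rfl⟩, _, ⟨⟨I', J'⟩, ⟨-, hJ'₁, hJ'₂⟩, rfl⟩, h⟩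
    have hs : (n : ℝ)⁻¹ * J ∈ Ioc (-1) 1 := by
      rw [inv_mul_eq_div, mem_Ioc, lt_div_iff₀ hn', div_le_iff₀ hn', neg_one_mul, one_mul]
      exact ⟨by exact_mod_cast (by omega : -(n : ℤ) < J),
        by exact_mod_cast (by omega : J ≤ (n : ℤ))⟩
    have ht : (n : ℝ)⁻¹ * J' ∈ Ico (-1) 1 := by
      rw [inv_mul_eq_div, mem_Ico, le_div_iff₀ hn', div_lt_iff₀ hn', neg_one_mul, one_mul]
      exact ⟨by exact_mod_cast (by omega : -(n : ℤ) ≤ J'),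
        by exact_mod_cast (by omega : J' < (n : ℤ))⟩
    have hx := eq_zero_of_mk_mul_eq_mul_mk h.symm (mul_ne_one_of_mem_Ioc_of_mem_Ico hs ht)
    simp [fanPoint, hx]
  · rintro _ rfl
    exact ⟨zero_mem_fanGrid ⟨by omega, by omega⟩ (by omega),
      0, zero_mem_fanGrid ⟨by omega, by omega⟩ (by omega), rfl⟩

end Linogram

/-- For an even integer `M ≥ 2` and an integer `N ≥ 4` divisible by 4, the Linogram
Fourier Domain `𝔏_{M,N}` has exactly `(M−1)N + 1` distinct points. -/
theorem LFD_card (M N : ℕ) (hM : 2 ≤ M) (hN : 4 ≤ N) (hMe : Even M) (hN4 : 4 ∣ N) :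
    (LFD M N).ncard = (M - 1) * N + 1 := by
  obtain ⟨m, rfl⟩ : ∃ m, M = 2 * m := hMe.exists_two_nsmul M
  obtain ⟨n, rfl⟩ := hN4
  have hm : 0 < m := by omega
  have hn : 0 < n := by omega
  have hu : π / m ≠ 0 := div_ne_zero pi_ne_zero (by positivity)
  have hv : (n : ℝ)⁻¹ ≠ 0 := by positivity
  have hH := ncard_fanGrid hu hv (a := -m) (b := m - 1) (c := 1 - n) (d := n)
    (by omega) (by omega) (by omega)
  have hV := ncard_fanGrid hu hv (a := 1 - m) (b := m) (c := -n) (d := n - 1)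
    (by omega) (by omega) (by omega)
  have hUnion :=
    ncard_union_add_ncard_inter (linogramH (2 * m) (4 * n)) (linogramV (2 * m) (4 * n))
    (linogramH_eq_fanGrid m n ▸ fanGrid_finite)
    (linogramV_eq_swap_fanGrid m n ▸ fanGrid_finite.image _)
  rw [linogramH_inter_linogramV m n hm hn, ncard_singleton, linogramH_eq_fanGrid,
    linogramV_eq_swap_fanGrid, Prod.swap_injective.injOn.ncard_image] at hUnion
  rw [LFD, linogramH_eq_fanGrid, linogramV_eq_swap_fanGrid]
  zify [show 1 ≤ 2 * m by omega] at hUnion ⊢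
  linear_combination hUnion + hH + hV
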